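/- arXiv:2002.06848 — 4 statements merged into one kernel-verified Lean document; each statement's English description precedes it below -/
import Mathlib

section
/- Let E be a real inner product space (e.g. ℝ^p with the Euclidean inner product) and let f : E → ℝ be twice continuously differentiable, with gradient ∇f and Hessian ∇²f (the second derivative, viewed as a symmetric continuous bilinear form). Suppose the Hessian is M-Lipschitz continuous, i.e. ‖∇²f(x) − ∇²f(y)‖ ≤ M‖x − y‖ in operator norm for all x, y. Then for all x, y ∈ E: f(x) ≤ f(y) + ⟨∇f(y), x − y⟩ + (1/2)⟨x − y, ∇²f(y)(x − y)⟩ + (M/6)‖x − y‖³. -/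
open scoped RealInnerProductSpace

/-!
Restrict `f` to the segment: `g t = f (y + t • (x - y))` has `g' 0 = ⟪∇f y, x - y⟫`,
`g'' 0 = ∇²f y (x - y, x - y)`, and `g'' t - g'' 0 ≤ M ‖x - y‖³ t`. For the Taylor remainder
`ψ t = g t - g 0 - g' 0 t - g'' 0 t² / 2 - M ‖x - y‖³ t³ / 6` this says `ψ'' ≤ 0` on `[0, ∞)`;
since `ψ 0 = ψ' 0 = 0`, two monotonicity arguments give `ψ 1 ≤ 0`.
-/

open Set

theorem antitoneOn_Ici_of_hasDerivAt_nonpos {φ φ' : ℝ → ℝ} {a : ℝ}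
    (hφ : ∀ t, HasDerivAt φ (φ' t) t) (hφ' : ∀ t, a < t → φ' t ≤ 0) :
    AntitoneOn φ (Ici a) :=
  antitoneOn_of_hasDerivWithinAt_nonpos (convex_Ici a)
    (fun t _ => (hφ t).continuousAt.continuousWithinAt)
    (fun t _ => (hφ t).hasDerivWithinAt)
    (fun t ht => hφ' t (by simpa using ht))

theorem le_taylor_two_add_cubic {g g' g'' : ℝ → ℝ} {L : ℝ}
    (hg : ∀ t, HasDerivAt g (g' t) t) (hg' : ∀ t, HasDerivAt g' (g'' t) t)
    (hg'' : ∀ t, 0 < t → g'' t - g'' 0 ≤ L * t) {t : ℝ} (ht : 0 ≤ t) :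
    g t ≤ g 0 + g' 0 * t + g'' 0 / 2 * t ^ 2 + L / 6 * t ^ 3 := by
  set ψ' : ℝ → ℝ := fun s => g' s - g' 0 - g'' 0 * s - L / 2 * s ^ 2
  set ψ : ℝ → ℝ := fun s => g s - g 0 - g' 0 * s - g'' 0 / 2 * s ^ 2 - L / 6 * s ^ 3
  have hψ'_deriv : ∀ s, HasDerivAt ψ' (g'' s - g'' 0 - L * s) s := fun s =>
    (((hg' s).sub_const (g' 0)).sub ((hasDerivAt_id' s).const_mul (g'' 0))).sub
      ((hasDerivAt_pow 2 s).const_mul (L / 2)) |>.congr_deriv (by ring)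
  have hψ_deriv : ∀ s, HasDerivAt ψ (ψ' s) s := fun s =>
    ((((hg s).sub_const (g 0)).sub ((hasDerivAt_id' s).const_mul (g' 0))).sub
      ((hasDerivAt_pow 2 s).const_mul (g'' 0 / 2))).sub
      ((hasDerivAt_pow 3 s).const_mul (L / 6)) |>.congr_deriv (by simp only [ψ']; ring)
  have hψ'_nonpos : ∀ s, 0 < s → ψ' s ≤ 0 := fun s hs => by
    have := antitoneOn_Ici_of_hasDerivAt_nonpos hψ'_deriv
      (fun r hr => by linarith [hg'' r hr]) self_mem_Ici hs.le hs.le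
    simpa [ψ'] using this
  have := antitoneOn_Ici_of_hasDerivAt_nonpos hψ_deriv hψ'_nonpos self_mem_Ici ht ht
  simp only [ψ] at this
  linarith

section Segment

variable {E F : Type*} [NormedAddCommGroup E] [NormedSpace ℝ E]
  [NormedAddCommGroup F] [NormedSpace ℝ F]

theorem HasFDerivAt.hasDerivAt_comp_add_smul {g : E → F} {g' : E →L[ℝ] F} {y h : E} {t : ℝ}
    (hg : HasFDerivAt g g' (y + t • h)) : HasDerivAt (fun s : ℝ => g (y + s • h)) (g' h) t :=
  hg.comp_hasDerivAt t <|
    ((hasDerivAt_id t).smul_const h).const_add y |>.congr_deriv (one_smul ℝ h)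

theorem ContDiff.hasDerivAt_fderiv_add_smul_apply {f : E → F} (hf : ContDiff ℝ 2 f) (y h : E)
    (t : ℝ) : HasDerivAt (fun s : ℝ => fderiv ℝ f (y + s • h) h)
      (iteratedFDeriv ℝ 2 f (y + t • h) ![h, h]) t := by
  have hf' : Differentiable ℝ (fderiv ℝ f) :=
    (hf.fderiv_right (m := 1) le_rfl).differentiable one_ne_zero
  have := (hf' (y + t • h)).hasFDerivAt.hasDerivAt_comp_add_smul.clm_apply
    (hasDerivAt_const t h)
  simpa [iteratedFDeriv_two_apply] using this

theorem iteratedFDeriv_two_add_smul_sub_le {f : E → ℝ} {M : ℝ}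
    (hLip : ∀ x y : E, ‖iteratedFDeriv ℝ 2 f x - iteratedFDeriv ℝ 2 f y‖ ≤ M * ‖x - y‖)
    (y h : E) {t : ℝ} (ht : 0 ≤ t) :
    iteratedFDeriv ℝ 2 f (y + t • h) ![h, h] - iteratedFDeriv ℝ 2 f y ![h, h]
      ≤ M * ‖h‖ ^ 3 * t := by
  have hnorm : ‖iteratedFDeriv ℝ 2 f (y + t • h) - iteratedFDeriv ℝ 2 f y‖ ≤ M * (t * ‖h‖) := by
    simpa [norm_smul, abs_of_nonneg ht] using hLip (y + t • h) y
  have hbilin := ContinuousMultilinearMap.le_of_opNorm_le hnorm ![h, h]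
  simp only [sub_apply, Fin.prod_univ_two, Matrix.cons_val_zero,
    Matrix.cons_val_one, Real.norm_eq_abs] at hbilin
  calc _ ≤ M * (t * ‖h‖) * (‖h‖ * ‖h‖) := le_of_abs_le hbilin
    _ = M * ‖h‖ ^ 3 * t := by ring

end Segment

theorem cubic_overestimation_general
    {E : Type*} [NormedAddCommGroup E] [InnerProductSpace ℝ E] [CompleteSpace E]
    (f : E → ℝ) (M : ℝ)
    (hf : ContDiff ℝ 2 f)
    (hLip : ∀ x y : E, ‖iteratedFDeriv ℝ 2 f x - iteratedFDeriv ℝ 2 f y‖ ≤ M * ‖x - y‖) :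
    ∀ x y : E,
      f x ≤ f y + ⟪gradient f y, x - y⟫ + (1 / 2) * iteratedFDeriv ℝ 2 f y ![x - y, x - y]
        + (M / 6) * ‖x - y‖ ^ 3 := by
  intro x y
  have key := le_taylor_two_add_cubic (g := fun t : ℝ => f (y + t • (x - y)))
    (fun t => (hf.differentiable two_ne_zero _).hasFDerivAt.hasDerivAt_comp_add_smul)
    (hf.hasDerivAt_fderiv_add_smul_apply y (x - y))
    (fun t ht => by simpa using iteratedFDeriv_two_add_smul_sub_le hLip y (x - y) ht.le)
    zero_le_one
  simp only [zero_smul, add_zero, one_smul, add_sub_cancel, one_pow, mul_one] at key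
  rw [inner_gradient_left]
  linarith

/-- Cubic overestimation bound: if `f` is twice continuously differentiable with
`M`-Lipschitz Hessian, then
`f x ≤ f y + ⟪∇f y, x - y⟫ + (1/2) ⟪x - y, ∇²f y (x - y)⟫ + (M/6) ‖x - y‖³`. -/
theorem cubic_overestimation
    {E : Type*} [NormedAddCommGroup E] [InnerProductSpace ℝ E] [CompleteSpace E]
    (f : E → ℝ) (M : ℝ) (hM : 0 < M)
    (hf : ContDiff ℝ 2 f)
    (hLip : ∀ x y : E, ‖iteratedFDeriv ℝ 2 f x - iteratedFDeriv ℝ 2 f y‖ ≤ M * ‖x - y‖) :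
    ∀ x y : E,
      f x ≤ f y + ⟪gradient f y, x - y⟫ + (1 / 2) * iteratedFDeriv ℝ 2 f y ![x - y, x - y]
        + (M / 6) * ‖x - y‖ ^ 3 :=
  cubic_overestimation_general f M hf hLip
end

section
/- Let H be a symmetric real p×p matrix with smallest eigenvalue λ_p(H), let g ∈ ℝ^p, σ > 0, and λ > 0. Suppose H + λI is positive definite and the vector d = −(H + λI)^{-1} g satisfies σ‖d‖ = λ. Then λ·(λ + λ_p(H)) ≤ σ‖g‖. -/
/-!
Write `A = H + λI`, so that `A d = -g`. Since every eigenvalue of `H` is at least `λ_p(H)`, the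
matrix `A - (λ + λ_p(H)) I = H - λ_p(H) I` is positive semidefinite, hence
`(λ + λ_p(H)) ‖d‖² ≤ ⟪d, A d⟫ = -⟪d, g⟫ ≤ ‖d‖ ‖g‖`, i.e. `(λ + λ_p(H)) ‖d‖ ≤ ‖g‖`.
Multiplying by `σ` and using `σ‖d‖ = λ` gives the claim.
-/

open scoped ComplexOrder MatrixOrder

section InnerProductSpace

variable {𝕜 E : Type*} [RCLike 𝕜] [NormedAddCommGroup E] [InnerProductSpace 𝕜 E]

lemma LinearMap.IsPositive.mul_norm_le_norm_apply {T : E →ₗ[𝕜] E} {c : ℝ}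
    (hT : (T - (c : 𝕜) • LinearMap.id).IsPositive) (x : E) : c * ‖x‖ ≤ ‖T x‖ := by
  have hquad : c * ‖x‖ ^ 2 ≤ ‖x‖ * ‖T x‖ := by
    have h := hT.re_inner_nonneg_right x
    rw [LinearMap.sub_apply, inner_sub_right, map_sub, LinearMap.smul_apply, LinearMap.id_apply,
      inner_smul_right, RCLike.re_ofReal_mul, inner_self_eq_norm_sq] at h
    linarith [re_inner_le_norm (𝕜 := 𝕜) x (T x)]
  rcases (norm_nonneg x).eq_or_lt with hx | hx
  · rw [← hx, mul_zero]
    exact norm_nonneg _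
  · nlinarith

end InnerProductSpace

namespace Matrix

variable {𝕜 n : Type*} [RCLike 𝕜] [Fintype n] [DecidableEq n]

lemma IsHermitian.posSemidef_sub_smul_one {H : Matrix n n 𝕜} (hH : H.IsHermitian) {μ : ℝ}
    (hμ : ∀ i, μ ≤ hH.eigenvalues i) : (H - μ • (1 : Matrix n n 𝕜)).PosSemidef := by
  rw [← le_iff, ← Algebra.algebraMap_eq_smul_one]
  refine (algebraMap_le_iff_le_spectrum hH.isSelfAdjoint).mpr fun x hx => ?_
  obtain ⟨i, rfl⟩ := hH.spectrum_real_eq_range_eigenvalues ▸ hx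
  exact hμ i

lemma toEuclideanLin_sub_smul_one (A : Matrix n n 𝕜) (c : ℝ) :
    (A - c • (1 : Matrix n n 𝕜)).toEuclideanLin = A.toEuclideanLin - (c : 𝕜) • LinearMap.id := by
  rw [map_sub, RCLike.real_smul_eq_coe_smul (K := 𝕜) c (1 : Matrix n n 𝕜), map_smul]
  congr 2
  ext x i
  simp

lemma PosSemidef.mul_norm_le_norm_toEuclideanLin_apply {A : Matrix n n 𝕜} {c : ℝ}
    (hA : (A - c • (1 : Matrix n n 𝕜)).PosSemidef) (x : EuclideanSpace 𝕜 n) :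
    c * ‖x‖ ≤ ‖A.toEuclideanLin x‖ := by
  rw [← isPositive_toEuclideanLin_iff, toEuclideanLin_sub_smul_one] at hA
  exact hA.mul_norm_le_norm_apply x

lemma toEuclideanLin_apply_toEuclideanLin_inv {A : Matrix n n 𝕜} (hA : IsUnit A)
    (x : EuclideanSpace 𝕜 n) : A.toEuclideanLin (A⁻¹.toEuclideanLin x) = x := by
  ext i
  simp [mulVec_mulVec, mul_nonsing_inv A ((isUnit_iff_isUnit_det A).mp hA)]

end Matrix

theorem cubic_subproblem_multiplier_upper_bound_general
    (p : ℕ) (hp : 1 ≤ p)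
    (H : Matrix (Fin p) (Fin p) ℝ) (hH : H.IsHermitian)
    (g : EuclideanSpace ℝ (Fin p)) (σ lam : ℝ) (hσ : 0 < σ)
    (hpos : (H + lam • (1 : Matrix (Fin p) (Fin p) ℝ)).PosDef)
    (d : EuclideanSpace ℝ (Fin p))
    (hd : d = -(Matrix.toEuclideanLin (H + lam • (1 : Matrix (Fin p) (Fin p) ℝ))⁻¹ g))
    (hsec : σ * ‖d‖ = lam) :
    lam * (lam + Finset.univ.inf'
        (Finset.univ_nonempty_iff.mpr (Fin.pos_iff_nonempty.mp hp)) hH.eigenvalues)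
      ≤ σ * ‖g‖ := by
  set A := H + lam • (1 : Matrix (Fin p) (Fin p) ℝ)
  set μ := Finset.univ.inf'
    (Finset.univ_nonempty_iff.mpr (Fin.pos_iff_nonempty.mp hp)) hH.eigenvalues
  have hshift : (A - (lam + μ) • (1 : Matrix (Fin p) (Fin p) ℝ)).PosSemidef := by
    rw [show A - (lam + μ) • (1 : Matrix (Fin p) (Fin p) ℝ) = H - μ • 1 by module]
    exact hH.posSemidef_sub_smul_one fun i => Finset.inf'_le _ (Finset.mem_univ i)
  have hAd : A.toEuclideanLin d = -g := by
    rw [hd, map_neg, Matrix.toEuclideanLin_apply_toEuclideanLin_inv hpos.isUnit]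
  have hdg : (lam + μ) * ‖d‖ ≤ ‖g‖ := by
    simpa only [hAd, norm_neg] using hshift.mul_norm_le_norm_toEuclideanLin_apply d
  calc lam * (lam + μ) = σ * ((lam + μ) * ‖d‖) := by rw [← hsec]; ring
    _ ≤ σ * ‖g‖ := by gcongr

/-- If `H + λI ≻ 0` and `d = -(H + λI)⁻¹ g` satisfies the secular equation `σ‖d‖ = λ`,
then `λ(λ + λ_min(H)) ≤ σ‖g‖`, where `λ_min(H)` is the smallest eigenvalue of `H`. -/
theorem cubic_subproblem_multiplier_upper_bound
    (p : ℕ) (hp : 1 ≤ p)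
    (H : Matrix (Fin p) (Fin p) ℝ) (hH : H.IsHermitian)
    (g : EuclideanSpace ℝ (Fin p)) (σ lam : ℝ) (hσ : 0 < σ) (hlam : 0 < lam)
    (hpos : (H + lam • (1 : Matrix (Fin p) (Fin p) ℝ)).PosDef)
    (d : EuclideanSpace ℝ (Fin p))
    (hd : d = -(Matrix.toEuclideanLin (H + lam • (1 : Matrix (Fin p) (Fin p) ℝ))⁻¹ g))
    (hsec : σ * ‖d‖ = lam) :
    lam * (lam + Finset.univ.inf'
        (Finset.univ_nonempty_iff.mpr (Fin.pos_iff_nonempty.mp hp)) hH.eigenvalues)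
      ≤ σ * ‖g‖ :=
  cubic_subproblem_multiplier_upper_bound_general p hp H hH g σ lam hσ hpos d hd hsec
end

section
/- Let H be a symmetric real p×p matrix with largest eigenvalue λ_1(H), let g ∈ ℝ^p, σ > 0, and λ > 0. Suppose H + λI is positive definite and the vector d = −(H + λI)^{-1} g satisfies σ‖d‖ = λ. Then λ·(λ + λ_1(H)) ≥ σ‖g‖. -/
/-!
In an orthonormal eigenbasis of `H`, the matrix `H + λI` acts diagonally with entries
`λᵢ(H) + λ`, all positive since `H + λI ≻ 0`. Hence `‖(H + λI) x‖ ≤ (λ₁(H) + λ) ‖x‖`, and since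
`g = -(H + λI) d`, the secular equation gives `σ‖g‖ ≤ (λ₁(H) + λ) σ‖d‖ = (λ₁(H) + λ) λ`.
-/

open Matrix
open scoped ComplexOrder

theorem Matrix.toLpLin_apply_toLpLin_nonsing_inv {n R : Type*} [Fintype n] [DecidableEq n]
    [CommRing R] (p : ENNReal) {A : Matrix n n R} (hA : IsUnit A) (x : WithLp p (n → R)) :
    toLpLin p p A (toLpLin p p A⁻¹ x) = x := by
  rw [← LinearMap.comp_apply, ← toLpLin_mul_same,
    mul_nonsing_inv _ ((isUnit_iff_isUnit_det A).mp hA), toLpLin_one, LinearMap.id_apply]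

theorem Matrix.IsHermitian.add_smul_one {𝕜 n : Type*} [RCLike 𝕜] [DecidableEq n]
    {H : Matrix n n 𝕜} (hH : H.IsHermitian) (c : ℝ) :
    (H + c • (1 : Matrix n n 𝕜)).IsHermitian :=
  hH.add (isHermitian_one.smul (IsSelfAdjoint.all c))

namespace Matrix.IsHermitian

variable {𝕜 n : Type*} [RCLike 𝕜] [Fintype n] [DecidableEq n]
  {H : Matrix n n 𝕜} (hH : H.IsHermitian) (c : ℝ)

theorem toEuclideanLin_add_smul_one_eigenvectorBasis (i : n) :
    toEuclideanLin (H + c • 1) (hH.eigenvectorBasis i) =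
      (hH.eigenvalues i + c) • hH.eigenvectorBasis i := by
  ext1
  simp only [toLpLin_apply, add_mulVec, hH.mulVec_eigenvectorBasis, smul_mulVec, one_mulVec,
    add_smul]
  rfl

theorem repr_toEuclideanLin_add_smul_one (x : EuclideanSpace 𝕜 n) (i : n) :
    hH.eigenvectorBasis.repr (toEuclideanLin (H + c • 1) x) i =
      ((hH.eigenvalues i + c : ℝ) : 𝕜) * hH.eigenvectorBasis.repr x i := by
  rw [OrthonormalBasis.repr_apply_apply, OrthonormalBasis.repr_apply_apply,
    ← isSymmetric_toEuclideanLin_iff.mpr (hH.add_smul_one c),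
    toEuclideanLin_add_smul_one_eigenvectorBasis, RCLike.real_smul_eq_coe_smul (K := 𝕜),
    inner_smul_real_left, RCLike.real_smul_eq_coe_mul]

theorem eigenvalues_add_pos_of_posDef (hA : (H + c • (1 : Matrix n n 𝕜)).PosDef) (i : n) :
    0 < hH.eigenvalues i + c := by
  set v := hH.eigenvectorBasis i
  have hv : WithLp.ofLp v ≠ 0 := by simpa using hH.eigenvectorBasis.orthonormal.ne_zero i
  have hv_unit : star (WithLp.ofLp v) ⬝ᵥ WithLp.ofLp v = 1 := by
    rw [dotProduct_comm, ← EuclideanSpace.inner_eq_star_dotProduct,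
      inner_self_eq_norm_sq_to_K, hH.eigenvectorBasis.orthonormal.1 i]
    simp
  have hpos := hA.dotProduct_mulVec_pos hv
  rw [add_mulVec, hH.mulVec_eigenvectorBasis, smul_mulVec, one_mulVec, ← add_smul,
    dotProduct_smul, hv_unit] at hpos
  simpa using hpos

theorem norm_toEuclideanLin_add_smul_one_le {M : ℝ} (hM : 0 ≤ M)
    (hbound : ∀ i, |hH.eigenvalues i + c| ≤ M) (x : EuclideanSpace 𝕜 n) :
    ‖toEuclideanLin (H + c • 1) x‖ ≤ M * ‖x‖ := by
  set b := hH.eigenvectorBasis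
  have hsq : ‖toEuclideanLin (H + c • 1) x‖ ^ 2 ≤ (M * ‖x‖) ^ 2 := calc
    ‖toEuclideanLin (H + c • 1) x‖ ^ 2 = ∑ i, |hH.eigenvalues i + c| ^ 2 * ‖b.repr x i‖ ^ 2 := by
      rw [← b.repr.norm_map, EuclideanSpace.norm_sq_eq]
      congr! 1 with i
      rw [hH.repr_toEuclideanLin_add_smul_one, norm_mul, RCLike.norm_ofReal, mul_pow]
    _ ≤ ∑ i, M ^ 2 * ‖b.repr x i‖ ^ 2 := by
      gcongr with i
      exact hbound i
    _ = (M * ‖x‖) ^ 2 := by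
      rw [← Finset.mul_sum, ← EuclideanSpace.norm_sq_eq, b.repr.norm_map, mul_pow]
  exact (pow_le_pow_iff_left₀ (norm_nonneg _) (by positivity) two_ne_zero).mp hsq

end Matrix.IsHermitian

theorem cubic_subproblem_multiplier_lower_bound_general
    (p : ℕ) (hp : 1 ≤ p)
    (H : Matrix (Fin p) (Fin p) ℝ) (hH : H.IsHermitian)
    (g : EuclideanSpace ℝ (Fin p)) (σ lam : ℝ) (hσ : 0 < σ)
    (hpos : (H + lam • (1 : Matrix (Fin p) (Fin p) ℝ)).PosDef)
    (d : EuclideanSpace ℝ (Fin p))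
    (hd : d = -(Matrix.toEuclideanLin (H + lam • (1 : Matrix (Fin p) (Fin p) ℝ))⁻¹ g))
    (hsec : σ * ‖d‖ = lam) :
    lam * (lam + Finset.univ.sup'
        (Finset.univ_nonempty_iff.mpr (Fin.pos_iff_nonempty.mp hp)) hH.eigenvalues)
      ≥ σ * ‖g‖ := by
  set L := Finset.univ.sup' _ hH.eigenvalues
  have hAd : toEuclideanLin (H + lam • 1) d = -g := by
    rw [hd, map_neg, toLpLin_apply_toLpLin_nonsing_inv _ hpos.isUnit]
  have hbound (i : Fin p) : |hH.eigenvalues i + lam| ≤ L + lam := by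
    rw [abs_of_pos (hH.eigenvalues_add_pos_of_posDef lam hpos i)]
    exact add_le_add_left (Finset.le_sup' _ (Finset.mem_univ i)) lam
  have hL : 0 ≤ L + lam := (abs_nonneg _).trans (hbound ⟨0, hp⟩)
  calc σ * ‖g‖ = σ * ‖toEuclideanLin (H + lam • 1) d‖ := by rw [hAd, norm_neg]
    _ ≤ σ * ((L + lam) * ‖d‖) := by
      gcongr
      exact hH.norm_toEuclideanLin_add_smul_one_le lam hL hbound d
    _ = lam * (lam + L) := by linear_combination (L + lam) * hsec

/-- If `H + λI ≻ 0` and `d = -(H + λI)⁻¹ g` satisfies the secular equation `σ‖d‖ = λ`,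
then `λ(λ + λ_max(H)) ≥ σ‖g‖`, where `λ_max(H)` is the largest eigenvalue of `H`. -/
theorem cubic_subproblem_multiplier_lower_bound
    (p : ℕ) (hp : 1 ≤ p)
    (H : Matrix (Fin p) (Fin p) ℝ) (hH : H.IsHermitian)
    (g : EuclideanSpace ℝ (Fin p)) (σ lam : ℝ) (hσ : 0 < σ) (hlam : 0 < lam)
    (hpos : (H + lam • (1 : Matrix (Fin p) (Fin p) ℝ)).PosDef)
    (d : EuclideanSpace ℝ (Fin p))
    (hd : d = -(Matrix.toEuclideanLin (H + lam • (1 : Matrix (Fin p) (Fin p) ℝ))⁻¹ g))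
    (hsec : σ * ‖d‖ = lam) :
    lam * (lam + Finset.univ.sup'
        (Finset.univ_nonempty_iff.mpr (Fin.pos_iff_nonempty.mp hp)) hH.eigenvalues)
      ≥ σ * ‖g‖ :=
  cubic_subproblem_multiplier_lower_bound_general p hp H hH g σ lam hσ hpos d hd hsec
end

section
/- Let H be a symmetric real p×p matrix, g ∈ ℝ^p, σ > 0, and define m(d) = ⟨g, d⟩ + (1/2)⟨d, H d⟩ + (σ/3)‖d‖³ for d ∈ ℝ^p. Suppose d* ∈ ℝ^p satisfies (H + σ‖d*‖·I) d* = −g and the matrix H + σ‖d*‖·I is positive semidefinite. Then d* is a global minimizer of m, i.e. m(d*) ≤ m(d) for all d ∈ ℝ^p. -/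
open scoped RealInnerProductSpace

/-! With `A = H + σ‖d*‖ I` and `g = -A d*`, completing the square gives
`m(d) - m(d*) = ½⟨d - d*, A (d - d*)⟩ + (σ/6)(‖d‖ - ‖d*‖)²(2‖d‖ + ‖d*‖)`,
a sum of two nonnegative terms. -/

section CubicModel

variable {E : Type*} [NormedAddCommGroup E] [InnerProductSpace ℝ E]

noncomputable def cubicModel (T : E →ₗ[ℝ] E) (g : E) (σ : ℝ) (d : E) : ℝ :=
  ⟪g, d⟫ + (1 / 2) * ⟪d, T d⟫ + (σ / 3) * ‖d‖ ^ 3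

theorem cubicModel_sub_cubicModel_eq {T : E →ₗ[ℝ] E} (hT : T.IsSymmetric) {g d₀ : E} {σ : ℝ}
    (hfoc : (T + (σ * ‖d₀‖) • 1) d₀ = -g) (d : E) :
    cubicModel T g σ d - cubicModel T g σ d₀ =
      (1 / 2) * ⟪d - d₀, (T + (σ * ‖d₀‖) • 1) (d - d₀)⟫
        + (σ / 6) * (‖d‖ - ‖d₀‖) ^ 2 * (2 * ‖d‖ + ‖d₀‖) := by
  rw [← neg_neg g, ← hfoc]
  have hcross : ⟪d, T d₀⟫ = ⟪d₀, T d⟫ := by rw [← hT, real_inner_comm]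
  simp only [cubicModel, LinearMap.add_apply, LinearMap.smul_apply, Module.End.one_apply,
    map_sub, inner_neg_left, inner_add_left, inner_add_right, inner_sub_left, inner_sub_right,
    real_inner_smul_left, real_inner_smul_right, real_inner_self_eq_norm_sq, hcross, hT d₀,
    real_inner_comm d d₀]
  ring

theorem cubicModel_le_of_isPositive {T : E →ₗ[ℝ] E} {g d₀ : E} {σ : ℝ} (hσ : 0 ≤ σ)
    (hfoc : (T + (σ * ‖d₀‖) • 1) d₀ = -g) (hpos : (T + (σ * ‖d₀‖) • 1).IsPositive) (d : E) :
    cubicModel T g σ d₀ ≤ cubicModel T g σ d := by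
  have hT : T.IsSymmetric := by
    have := hpos.isSymmetric.sub (LinearMap.IsSymmetric.id.smul (conj_trivial (σ * ‖d₀‖)))
    rwa [← Module.End.one_eq_id, add_sub_cancel_right] at this
  have hquad := hpos.inner_nonneg_right (d - d₀)
  have hcubic : 0 ≤ (σ / 6) * (‖d‖ - ‖d₀‖) ^ 2 * (2 * ‖d‖ + ‖d₀‖) := by positivity
  linarith [cubicModel_sub_cubicModel_eq hT hfoc d]

end CubicModel

theorem Matrix.toEuclideanLin_add_smul_one {𝕜 n : Type*} [RCLike 𝕜] [Fintype n] [DecidableEq n]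
    (A : Matrix n n 𝕜) (c : 𝕜) :
    Matrix.toEuclideanLin (A + c • 1) = Matrix.toEuclideanLin A + c • 1 := by
  ext x i
  simp

theorem cubic_subproblem_global_minimizer_general
    (p : ℕ)
    (H : Matrix (Fin p) (Fin p) ℝ)
    (g : EuclideanSpace ℝ (Fin p)) (σ : ℝ) (hσ : 0 < σ)
    (dstar : EuclideanSpace ℝ (Fin p))
    (hfoc : Matrix.toEuclideanLin
        (H + (σ * ‖dstar‖) • (1 : Matrix (Fin p) (Fin p) ℝ)) dstar = -g)
    (hpsd : (H + (σ * ‖dstar‖) • (1 : Matrix (Fin p) (Fin p) ℝ)).PosSemidef) :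
    ∀ d : EuclideanSpace ℝ (Fin p),
      ⟪g, dstar⟫ + (1 / 2) * ⟪dstar, Matrix.toEuclideanLin H dstar⟫ + (σ / 3) * ‖dstar‖ ^ 3
        ≤ ⟪g, d⟫ + (1 / 2) * ⟪d, Matrix.toEuclideanLin H d⟫ + (σ / 3) * ‖d‖ ^ 3 := by
  have hpos := Matrix.isPositive_toEuclideanLin_iff.mpr hpsd
  rw [Matrix.toEuclideanLin_add_smul_one] at hfoc hpos
  exact cubicModel_le_of_isPositive hσ.le hfoc hpos

/-- Global optimality for the cubic-regularized quadratic model: if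
`(H + σ‖d*‖ I) d* = -g` and `H + σ‖d*‖ I ⪰ 0`, then `d*` is a global minimizer of
`m(d) = ⟨g, d⟩ + (1/2)⟨d, H d⟩ + (σ/3)‖d‖³`. -/
theorem cubic_subproblem_global_minimizer
    (p : ℕ) (hp : 1 ≤ p)
    (H : Matrix (Fin p) (Fin p) ℝ) (hH : H.IsSymm)
    (g : EuclideanSpace ℝ (Fin p)) (σ : ℝ) (hσ : 0 < σ)
    (dstar : EuclideanSpace ℝ (Fin p))
    (hfoc : Matrix.toEuclideanLin
        (H + (σ * ‖dstar‖) • (1 : Matrix (Fin p) (Fin p) ℝ)) dstar = -g)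
    (hpsd : (H + (σ * ‖dstar‖) • (1 : Matrix (Fin p) (Fin p) ℝ)).PosSemidef) :
    ∀ d : EuclideanSpace ℝ (Fin p),
      ⟪g, dstar⟫ + (1 / 2) * ⟪dstar, Matrix.toEuclideanLin H dstar⟫ + (σ / 3) * ‖dstar‖ ^ 3
        ≤ ⟪g, d⟫ + (1 / 2) * ⟪d, Matrix.toEuclideanLin H d⟫ + (σ / 3) * ‖d‖ ^ 3 :=
  cubic_subproblem_global_minimizer_general p H g σ hσ dstar hfoc hpsd
end
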